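/- For H(x,y,p,q) := α·(2qy − p²)^{3/2}/y², with α ∈ ℝ a constant, on the domain where y ≠ 0 and 2qy − p² > 0, the Wünschmann invariant W(H) := 9 D D H_q − 27 D H_p − 18 H_q D H_q + 18 H_q H_p + 4 H_q³ + 54 H_y vanishes identically, where D := ∂_x + p∂_y + q∂_p + H∂_q. -/

import Mathlib

/-- Partial derivative in the `x` slot. -/
noncomputable def px (G : ℝ → ℝ → ℝ → ℝ → ℝ) : ℝ → ℝ → ℝ → ℝ → ℝ :=
  fun x y p q => deriv (fun s => G s y p q) x

/-- Partial derivative in the `y` slot. -/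
noncomputable def py (G : ℝ → ℝ → ℝ → ℝ → ℝ) : ℝ → ℝ → ℝ → ℝ → ℝ :=
  fun x y p q => deriv (fun s => G x s p q) y

/-- Partial derivative in the `p` slot. -/
noncomputable def pp (G : ℝ → ℝ → ℝ → ℝ → ℝ) : ℝ → ℝ → ℝ → ℝ → ℝ :=
  fun x y p q => deriv (fun s => G x y s q) p

/-- Partial derivative in the `q` slot. -/
noncomputable def pq (G : ℝ → ℝ → ℝ → ℝ → ℝ) : ℝ → ℝ → ℝ → ℝ → ℝ :=
  fun x y p q => deriv (fun s => G x y p s) q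

/-- The total differentiation operator `D = ∂x + p ∂y + q ∂p + H ∂q` associated
to the third-order ODE `y''' = H(x,y,y',y'')`. -/
noncomputable def DOp (H G : ℝ → ℝ → ℝ → ℝ → ℝ) : ℝ → ℝ → ℝ → ℝ → ℝ :=
  fun x y p q =>
    px G x y p q + p * py G x y p q + q * pp G x y p q + H x y p q * pq G x y p q

/-- The Wünschmann invariant
`W(H) = 9 D D H_q − 27 D H_p − 18 H_q D H_q + 18 H_q H_p + 4 H_q³ + 54 H_y`. -/
noncomputable def Wun (H : ℝ → ℝ → ℝ → ℝ → ℝ) : ℝ → ℝ → ℝ → ℝ → ℝ :=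
  fun x y p q =>
    9 * DOp H (DOp H (pq H)) x y p q
      - 27 * DOp H (pp H) x y p q
      - 18 * pq H x y p q * DOp H (pq H) x y p q
      + 18 * pq H x y p q * pp H x y p q
      + 4 * (pq H x y p q) ^ 3
      + 54 * py H x y p q

/-!
Put `s = √(2qy − p²)`, so that `H = α s³ / y²` on the domain. The slot derivatives of `s` are
`s_y = q / s`, `s_p = -p / s`, `s_q = y / s`, which makes `H_q = 3αs/y`, `H_p = -3αps/y²` and
`D H_q`, `D H_p`, `D D H_q` rational functions of `y, p, q, s`; substituting them turns `W(H)` into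
a multiple of `s² − (2qy − p²)`. Iterating `D` needs these closed forms on a neighbourhood of the
point, which is why `D` is shown to be local.
-/

open Set

lemma deriv_comp_congr_of_eqOn {E F : Type*} [TopologicalSpace E] [NormedAddCommGroup F]
    [NormedSpace ℝ F] {f g : E → F} {U : Set E} (hU : IsOpen U) (hfg : EqOn f g U)
    {γ : ℝ → E} {t : ℝ} (hγ : ContinuousAt γ t) (ht : γ t ∈ U) :
    deriv (f ∘ γ) t = deriv (g ∘ γ) t :=
  ((hfg.eventuallyEq_of_mem (hU.mem_nhds ht)).comp_tendsto hγ).deriv_eq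

lemma DOp_congr {H G F : ℝ → ℝ → ℝ → ℝ → ℝ} {U : Set (ℝ × ℝ × ℝ × ℝ)} (hU : IsOpen U)
    (hGF : ∀ x y p q, (x, y, p, q) ∈ U → G x y p q = F x y p q) {x y p q : ℝ}
    (hz : (x, y, p, q) ∈ U) :
    DOp H G x y p q = DOp H F x y p q := by
  have hEq : EqOn (fun z : ℝ × ℝ × ℝ × ℝ => G z.1 z.2.1 z.2.2.1 z.2.2.2)
      (fun z => F z.1 z.2.1 z.2.2.1 z.2.2.2) U := fun z hz => hGF _ _ _ _ hz
  have hx : deriv (fun s => G s y p q) x = deriv (fun s => F s y p q) x :=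
    deriv_comp_congr_of_eqOn hU hEq (γ := fun s => (s, y, p, q)) (by fun_prop) hz
  have hy : deriv (fun s => G x s p q) y = deriv (fun s => F x s p q) y :=
    deriv_comp_congr_of_eqOn hU hEq (γ := fun s => (x, s, p, q)) (by fun_prop) hz
  have hp : deriv (fun s => G x y s q) p = deriv (fun s => F x y s q) p :=
    deriv_comp_congr_of_eqOn hU hEq (γ := fun s => (x, y, s, q)) (by fun_prop) hz
  have hq : deriv (fun s => G x y p s) q = deriv (fun s => F x y p s) q :=
    deriv_comp_congr_of_eqOn hU hEq (γ := fun s => (x, y, p, s)) (by fun_prop) hz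
  simp only [DOp, px, py, pp, pq, hx, hy, hp, hq]

lemma DOp_eq_of_hasDerivAt {H : ℝ → ℝ → ℝ → ℝ → ℝ} {g : ℝ → ℝ → ℝ → ℝ} {x y p q gy gp gq : ℝ}
    (hy : HasDerivAt (fun s => g s p q) gy y) (hp : HasDerivAt (fun s => g y s q) gp p)
    (hq : HasDerivAt (fun s => g y p s) gq q) :
    DOp H (fun _ y p q => g y p q) x y p q = p * gy + q * gp + H x y p q * gq := by
  simp only [DOp, px, py, pp, pq, deriv_const, hy.deriv, hp.deriv, hq.deriv, zero_add]

lemma HasDerivAt.rpow_three_halves {f : ℝ → ℝ} {f' t : ℝ} (hf : HasDerivAt f f' t) :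
    HasDerivAt (fun s => f s ^ ((3 : ℝ) / 2)) (3 / 2 * √(f t) * f') t := by
  convert hf.rpow_const (p := 3 / 2) (Or.inr (by norm_num)) using 1
  rw [Real.sqrt_eq_rpow]
  norm_num
  ring

lemma rpow_three_halves_eq_mul_sqrt {u : ℝ} (hu : 0 ≤ u) : u ^ ((3 : ℝ) / 2) = u * √u := by
  rw [show (3 : ℝ) / 2 = 1 + 1 / 2 by norm_num, Real.rpow_add' hu (by norm_num), Real.rpow_one,
    Real.sqrt_eq_rpow]

section Example

variable (α : ℝ) {x y p q : ℝ}

noncomputable def exampleH : ℝ → ℝ → ℝ → ℝ → ℝ :=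
  fun _ y p q => α * (2 * q * y - p ^ 2) ^ ((3 : ℝ) / 2) / y ^ 2

def exampleDomain : Set (ℝ × ℝ × ℝ × ℝ) :=
  {z | z.2.1 ≠ 0} ∩ {z | 0 < 2 * z.2.2.2 * z.2.1 - z.2.2.1 ^ 2}

lemma isOpen_exampleDomain : IsOpen exampleDomain :=
  (isOpen_ne_fun (by fun_prop) continuous_const).inter (isOpen_lt continuous_const (by fun_prop))

lemma hasDerivAt_disc_y : HasDerivAt (fun t => 2 * q * t - p ^ 2) (2 * q) y := by
  simpa using ((hasDerivAt_id y).const_mul (2 * q)).sub_const (p ^ 2)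

lemma hasDerivAt_disc_p : HasDerivAt (fun t => 2 * q * y - t ^ 2) (-(2 * p)) p := by
  simpa using (hasDerivAt_pow 2 p).const_sub (2 * q * y)

lemma hasDerivAt_disc_q : HasDerivAt (fun t => 2 * t * y - p ^ 2) (2 * y) q := by
  simpa using (((hasDerivAt_id q).const_mul 2).mul_const y).sub_const (p ^ 2)

lemma hasDerivAt_sqrt_disc_y (hu : 0 < 2 * q * y - p ^ 2) :
    HasDerivAt (fun t => √(2 * q * t - p ^ 2)) (q / √(2 * q * y - p ^ 2)) y := by
  convert hasDerivAt_disc_y.sqrt hu.ne' using 1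
  field_simp

lemma hasDerivAt_sqrt_disc_p (hu : 0 < 2 * q * y - p ^ 2) :
    HasDerivAt (fun t => √(2 * q * y - t ^ 2)) (-p / √(2 * q * y - p ^ 2)) p := by
  convert hasDerivAt_disc_p.sqrt hu.ne' using 1
  field_simp

lemma hasDerivAt_sqrt_disc_q (hu : 0 < 2 * q * y - p ^ 2) :
    HasDerivAt (fun t => √(2 * t * y - p ^ 2)) (y / √(2 * q * y - p ^ 2)) q := by
  convert hasDerivAt_disc_q.sqrt hu.ne' using 1
  field_simp

lemma exampleH_eq (hu : 0 ≤ 2 * q * y - p ^ 2) :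
    exampleH α x y p q = α * (2 * q * y - p ^ 2) * √(2 * q * y - p ^ 2) / y ^ 2 := by
  rw [exampleH, rpow_three_halves_eq_mul_sqrt hu, ← mul_assoc]

lemma pq_exampleH (hy : y ≠ 0) : pq (exampleH α) x y p q = 3 * α * √(2 * q * y - p ^ 2) / y := by
  have hH : HasDerivAt (fun t => exampleH α x y p t) _ q :=
    (hasDerivAt_disc_q.rpow_three_halves.const_mul α).div_const (y ^ 2)
  rw [pq, hH.deriv]
  field_simp

lemma pp_exampleH : pp (exampleH α) x y p q = -3 * α * p * √(2 * q * y - p ^ 2) / y ^ 2 := by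
  have hH : HasDerivAt (fun t => exampleH α x y t q) _ p :=
    (hasDerivAt_disc_p.rpow_three_halves.const_mul α).div_const (y ^ 2)
  rw [pp, hH.deriv]
  ring

lemma py_exampleH (hy : y ≠ 0) (hu : 0 < 2 * q * y - p ^ 2) :
    py (exampleH α) x y p q = α * (2 * p ^ 2 - q * y) * √(2 * q * y - p ^ 2) / y ^ 3 := by
  have hH : HasDerivAt (fun t => exampleH α x t p q) _ y :=
    (hasDerivAt_disc_y.rpow_three_halves.const_mul α).div (hasDerivAt_pow 2 y) (pow_ne_zero 2 hy)
  rw [py, hH.deriv, rpow_three_halves_eq_mul_sqrt hu.le]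
  field_simp
  ring

lemma DOp_pq_exampleH (hz : (x, y, p, q) ∈ exampleDomain) :
    DOp (exampleH α) (pq (exampleH α)) x y p q =
      3 * α * √(2 * q * y - p ^ 2) * (α * √(2 * q * y - p ^ 2) - p) / y ^ 2 := by
  obtain ⟨hy, hu⟩ : y ≠ 0 ∧ 0 < 2 * q * y - p ^ 2 := hz
  rw [DOp_congr isOpen_exampleDomain
    (fun x y p q hz => pq_exampleH α (x := x) (y := y) (p := p) (q := q) hz.1) ⟨hy, hu⟩]
  have hAy := ((hasDerivAt_sqrt_disc_y hu).const_mul (3 * α)).div (hasDerivAt_id' y) hy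
  have hAp := ((hasDerivAt_sqrt_disc_p hu).const_mul (3 * α)).div_const y
  have hAq := ((hasDerivAt_sqrt_disc_q hu).const_mul (3 * α)).div_const y
  rw [DOp_eq_of_hasDerivAt hAy hAp hAq, exampleH_eq α hu.le]
  have hs : 2 * q * y - p ^ 2 = √(2 * q * y - p ^ 2) ^ 2 := (Real.sq_sqrt hu.le).symm
  have hs0 : √(2 * q * y - p ^ 2) ≠ 0 := (Real.sqrt_pos.mpr hu).ne'
  set s := √(2 * q * y - p ^ 2)
  rw [hs]
  field_simp
  ring

lemma DOp_pp_exampleH (hz : (x, y, p, q) ∈ exampleDomain) :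
    DOp (exampleH α) (pp (exampleH α)) x y p q =
      3 * α * √(2 * q * y - p ^ 2) * (2 * p ^ 2 - α * p * √(2 * q * y - p ^ 2) - q * y)
        / y ^ 3 := by
  obtain ⟨hy, hu⟩ : y ≠ 0 ∧ 0 < 2 * q * y - p ^ 2 := hz
  rw [DOp_congr isOpen_exampleDomain
    (fun x y p q _ => pp_exampleH α (x := x) (y := y) (p := p) (q := q)) ⟨hy, hu⟩]
  have hBy := ((hasDerivAt_sqrt_disc_y hu).const_mul (-3 * α * p)).div (hasDerivAt_pow 2 y)
    (pow_ne_zero 2 hy)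
  have hBp := (((hasDerivAt_id' p).const_mul (-3 * α)).mul (hasDerivAt_sqrt_disc_p hu)).div_const
    (y ^ 2)
  have hBq := ((hasDerivAt_sqrt_disc_q hu).const_mul (-3 * α * p)).div_const (y ^ 2)
  rw [DOp_eq_of_hasDerivAt hBy hBp hBq, exampleH_eq α hu.le]
  have hs : 2 * q * y - p ^ 2 = √(2 * q * y - p ^ 2) ^ 2 := (Real.sq_sqrt hu.le).symm
  have hs0 : √(2 * q * y - p ^ 2) ≠ 0 := (Real.sqrt_pos.mpr hu).ne'
  set s := √(2 * q * y - p ^ 2)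
  rw [hs]
  field_simp
  ring

lemma DOp_DOp_pq_exampleH (hz : (x, y, p, q) ∈ exampleDomain) :
    DOp (exampleH α) (DOp (exampleH α) (pq (exampleH α))) x y p q =
      3 * α * √(2 * q * y - p ^ 2) * (2 * α ^ 2 * (2 * q * y - p ^ 2)
        - 3 * α * p * √(2 * q * y - p ^ 2) + 2 * p ^ 2 - q * y) / y ^ 3 := by
  obtain ⟨hy, hu⟩ : y ≠ 0 ∧ 0 < 2 * q * y - p ^ 2 := hz
  rw [DOp_congr isOpen_exampleDomain (fun x y p q hz => DOp_pq_exampleH α hz) ⟨hy, hu⟩]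
  have hCy := ((hasDerivAt_sqrt_disc_y hu).const_mul (3 * α)).mul
    (((hasDerivAt_sqrt_disc_y hu).const_mul α).sub_const p) |>.div (hasDerivAt_pow 2 y)
    (pow_ne_zero 2 hy)
  have hCp := ((hasDerivAt_sqrt_disc_p hu).const_mul (3 * α)).mul
    (((hasDerivAt_sqrt_disc_p hu).const_mul α).sub (hasDerivAt_id' p)) |>.div_const (y ^ 2)
  have hCq := ((hasDerivAt_sqrt_disc_q hu).const_mul (3 * α)).mul
    (((hasDerivAt_sqrt_disc_q hu).const_mul α).sub_const p) |>.div_const (y ^ 2)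
  rw [DOp_eq_of_hasDerivAt hCy hCp hCq, exampleH_eq α hu.le]
  simp only [Pi.mul_apply, Pi.sub_apply]
  have hs : 2 * q * y - p ^ 2 = √(2 * q * y - p ^ 2) ^ 2 := (Real.sq_sqrt hu.le).symm
  have hs0 : √(2 * q * y - p ^ 2) ≠ 0 := (Real.sqrt_pos.mpr hu).ne'
  set s := √(2 * q * y - p ^ 2)
  rw [hs]
  field_simp
  ring

end Example

/-- The Wünschmann invariant of `H = α (2qy − p²)^(3/2)/y²` vanishes on the domain
where `y ≠ 0` and `2qy − p² > 0`. -/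
theorem wunschmann_example_alpha (α : ℝ) :
    ∀ x y p q : ℝ, y ≠ 0 → 0 < 2 * q * y - p ^ 2 →
      Wun (fun _ y p q => α * (2 * q * y - p ^ 2) ^ ((3 : ℝ) / 2) / y ^ 2) x y p q
        = 0 := by
  intro x y p q hy hu
  change Wun (exampleH α) x y p q = 0
  have hz : (x, y, p, q) ∈ exampleDomain := ⟨hy, hu⟩
  rw [Wun, DOp_DOp_pq_exampleH α hz, DOp_pp_exampleH α hz, DOp_pq_exampleH α hz,
    pq_exampleH α hy, pp_exampleH α, py_exampleH α hy hu]
  have hs : 2 * q * y - p ^ 2 = √(2 * q * y - p ^ 2) ^ 2 := (Real.sq_sqrt hu.le).symm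
  set s := √(2 * q * y - p ^ 2)
  field_simp
  linear_combination 54 * α ^ 3 * s * hs
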